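/- arXiv:1606.02795 — 2 statements merged into one kernel-verified Lean document; each statement's English description precedes it below -/
import Mathlib

section
/- Suppose Y_n is a sequence of D-valued random elements such that for every (j,k) ∈ ℤ_+^2, (n ν[n,∞))^{-j} (n ν(−∞,−n])^{-k} P(Y_n ∈ ·) → C_{j,k}(·) in M(D ∖ D_{<j,k}). Then, for any measurable A ⊆ D for which the argmin defining (J(A),K(A)) is non-empty and A is bounded away from D_{<J(A),K(A)}, one has C_{J(A),K(A)}(A°) ≤ liminf_{n→∞} P(Y_n ∈ A)/[(n ν[n,∞))^{J(A)} (n ν(−∞,−n])^{K(A)}] and limsup_{n→∞} P(Y_n ∈ A)/[(n ν[n,∞))^{J(A)} (n ν(−∞,−n])^{K(A)}] ≤ C_{J(A),K(A)}(Ā). Moreover, if the argmin is empty and A is bounded away from D_{<l,m} ∪ D_{l,m} for some (l,m) ∈ ℤ_+^2 ∖ {(0,0)}, then P(Y_n ∈ A)/[(n ν[n,∞))^l (n ν(−∞,−n])^m] → 0. -/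
open MeasureTheory Filter Topology Set ProbabilityTheory
open scoped ENNReal NNReal Classical

noncomputable section

/-- `A` is bounded away from `B` (for a distance function `ρ`). -/
def BddAway {S : Type*} (ρ : S → S → ℝ) (A B : Set S) : Prop :=
  ∃ ε > 0, ∀ a ∈ A, ∀ b ∈ B, ε ≤ ρ a b

/-- `M(S∖C)`-convergence of a sequence of measures: convergence of the integrals of every
bounded nonnegative continuous function vanishing on an `r`-neighborhood of `C` for some
`r > 0`. -/
def MConv {S : Type*} [TopologicalSpace S] [MeasurableSpace S] (ρ : S → S → ℝ) (C : Set S)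
    (μ : ℕ → Measure S) (μlim : Measure S) : Prop :=
  ∀ f : S → ℝ, Continuous f → (∃ M, ∀ x, |f x| ≤ M) → (∀ x, 0 ≤ f x) →
    (∃ r > 0, ∀ x, (∃ y ∈ C, ρ y x < r) → f x = 0) →
    Filter.Tendsto (fun n => ∫⁻ x, ENNReal.ofReal (f x) ∂(μ n)) Filter.atTop
      (nhds (∫⁻ x, ENNReal.ofReal (f x) ∂μlim))

/-- Membership in the class `M(S∖C)`: a Borel measure giving no mass to `C`, whose
restriction to the complement of each `r`-neighborhood of `C` is finite. -/
def MemM {S : Type*} [MeasurableSpace S] (ρ : S → S → ℝ) (C : Set S) (μ : Measure S) : Prop :=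
  μ C = 0 ∧ ∀ r : ℝ, 0 < r → μ {x | ¬ ∃ y ∈ C, ρ y x < r} < ⊤

/-- `Y n` is asymptotically equivalent to `X n` with respect to the sequence `eps`. -/
def AsympEquiv {Ω S : Type*} [MeasurableSpace Ω] (P : Measure Ω) (ρ : S → S → ℝ)
    (X Y : ℕ → Ω → S) (eps : ℕ → ℝ) : Prop :=
  ∀ δ : ℝ, 0 < δ →
    Filter.limsup (fun n => (ENNReal.ofReal (eps n))⁻¹ * P {ω | δ ≤ ρ (X n ω) (Y n ω)})
      Filter.atTop = 0

/-- A function `g` is regularly varying at infinity with index `ρ`. -/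
def RegVarying (g : ℝ → ℝ) (ρ : ℝ) : Prop :=
  (∀ᶠ s in Filter.atTop, 0 < g s) ∧
  ∀ c : ℝ, 0 < c →
    Filter.Tendsto (fun s => g (c * s) / g s) Filter.atTop (nhds (c ^ ρ))

/-- The Pareto-type measure `ν_γ` on `(0,∞)` with `ν_γ(x,∞) = x^{-γ}`. -/
def nuPareto (γ : ℝ) : Measure ℝ :=
  (volume.restrict (Set.Ioi (0 : ℝ))).withDensity fun s => ENNReal.ofReal (γ * s ^ (-γ - 1))

/-- The ordered cone `{x : x 0 ≥ x 1 ≥ … }`. -/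
def ordCone (j : ℕ) : Set (Fin j → ℝ) := {x | ∀ i i' : Fin j, i ≤ i' → x i' ≤ x i}

/-- `ν_γ^j`: the `j`-fold product of `ν_γ` restricted to the ordered cone. -/
def nuPow (γ : ℝ) (j : ℕ) : Measure (Fin j → ℝ) :=
  (Measure.pi fun _ => nuPareto γ).restrict (ordCone j)

/-- The joint law of `j` i.i.d. uniform random variables on `[0,1]`. -/
def unifPow (j : ℕ) : Measure (Fin j → ℝ) :=
  Measure.pi fun _ => volume.restrict (Set.Icc (0 : ℝ) 1)

/-- Right-continuity together with existence of left limits, for a function on `[0,1]`. -/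
def IsCadlag (f : unitInterval → ℝ) : Prop :=
  (∀ t : unitInterval, Filter.Tendsto f (nhdsWithin t (Set.Ici t)) (nhds (f t))) ∧
  (∀ t : unitInterval, ∃ L : ℝ, Filter.Tendsto f (nhdsWithin t (Set.Iio t)) (nhds L))

/-- The Skorokhod space `D = D([0,1], ℝ)` of real-valued càdlàg functions on `[0,1]`. -/
structure D where
  toFun : unitInterval → ℝ
  cadlag : IsCadlag toFun

/-- The set of increasing homeomorphisms of `[0,1]` onto itself
(continuous strictly increasing bijections of `[0,1]`). -/
def TimeChanges : Set (unitInterval → unitInterval) :=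
  {l | Continuous l ∧ StrictMono l ∧ Function.Bijective l}

/-- The Skorokhod `J₁` distance on `D`:
`d(x,y) = inf_{λ ∈ Λ} (‖λ - id‖_∞ ⊔ ‖x ∘ λ - y‖_∞)`. -/
def dJ1 (x y : D) : ℝ :=
  sInf ((fun l : unitInterval → unitInterval =>
      max (⨆ t : unitInterval, |(l t : ℝ) - (t : ℝ)|)
          (⨆ t : unitInterval, |x.toFun (l t) - y.toFun t|)) '' TimeChanges)

/-- The Skorokhod `J₁` topology on `D`: the topology generated by the open `dJ1`-balls. -/
instance : TopologicalSpace D :=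
  TopologicalSpace.generateFrom {U : Set D | ∃ x ε, U = {y | dJ1 x y < ε}}

instance : MeasurableSpace D := borel D

/-- The step path `t ↦ ∑ i, x i · 1_{[u i, 1]}(t)`. -/
def stepPath {j : ℕ} (x u : Fin j → ℝ) : unitInterval → ℝ :=
  fun t => ∑ i, if u i ≤ (t : ℝ) then x i else 0

lemma step_right (c u : ℝ) (t : unitInterval) :
    Filter.Tendsto (fun s : unitInterval => if u ≤ (s : ℝ) then c else 0)
      (nhdsWithin t (Set.Ici t)) (nhds (if u ≤ (t : ℝ) then c else 0)) := by
  by_cases h : u ≤ (t : ℝ)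
  · rw [if_pos h]
    apply Filter.Tendsto.congr' _ tendsto_const_nhds
    filter_upwards [self_mem_nhdsWithin] with s hs
    rw [if_pos (le_trans h hs)]
  · rw [if_neg h]
    apply Filter.Tendsto.congr' _ tendsto_const_nhds
    have hV : IsOpen {s : unitInterval | (s : ℝ) < u} :=
      continuous_subtype_val.isOpen_preimage _ isOpen_Iio
    have ht : t ∈ {s : unitInterval | (s : ℝ) < u} := not_le.mp h
    filter_upwards [mem_nhdsWithin_of_mem_nhds (hV.mem_nhds ht)] with s hs
    rw [if_neg (not_le.mpr hs)]

lemma step_left (c u : ℝ) (t : unitInterval) :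
    Filter.Tendsto (fun s : unitInterval => if u ≤ (s : ℝ) then c else 0)
      (nhdsWithin t (Set.Iio t)) (nhds (if u < (t : ℝ) then c else 0)) := by
  by_cases h : u < (t : ℝ)
  · rw [if_pos h]
    apply Filter.Tendsto.congr' _ tendsto_const_nhds
    have hV : IsOpen {s : unitInterval | u < (s : ℝ)} :=
      continuous_subtype_val.isOpen_preimage _ isOpen_Ioi
    filter_upwards [mem_nhdsWithin_of_mem_nhds (hV.mem_nhds h)] with s hs
    rw [if_pos (le_of_lt hs)]
  · rw [if_neg h]
    apply Filter.Tendsto.congr' _ tendsto_const_nhds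
    filter_upwards [self_mem_nhdsWithin] with s hs
    have : (s : ℝ) < (t : ℝ) := hs
    rw [if_neg (not_le.mpr (lt_of_lt_of_le this (not_lt.mp h)))]

lemma isCadlag_stepPath {j : ℕ} (x u : Fin j → ℝ) : IsCadlag (stepPath x u) := by
  constructor
  · intro t
    have := tendsto_finset_sum (Finset.univ)
      (fun i (_ : i ∈ Finset.univ) => step_right (x i) (u i) t)
    exact this
  · intro t
    refine ⟨∑ i, if u i < (t : ℝ) then x i else 0, ?_⟩
    have := tendsto_finset_sum (Finset.univ)
      (fun i (_ : i ∈ Finset.univ) => step_left (x i) (u i) t)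
    exact this

/-- The element of `D` determined by jump sizes `x` and jump times `u`. -/
def stepD {j : ℕ} (x u : Fin j → ℝ) : D := ⟨stepPath x u, isCadlag_stepPath x u⟩

/-- `D_j`: nondecreasing step functions vanishing at the origin with exactly `j` jumps. -/
def Dstep (j : ℕ) : Set D :=
  {ξ | ∃ x u : Fin j → ℝ, (∀ i, 0 < x i) ∧ (∀ i, 0 < u i ∧ u i ≤ 1) ∧
    Function.Injective u ∧ ξ = stepD x u}

/-- `D_{<j} = ⋃_{0 ≤ l < j} D_l`. -/
def DstepLT (j : ℕ) : Set D := {ξ | ∃ l, l < j ∧ ξ ∈ Dstep l}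

/-- `D_{≤j} = ⋃_{0 ≤ l ≤ j} D_l`. -/
def DstepLE (j : ℕ) : Set D := {ξ | ∃ l, l ≤ j ∧ ξ ∈ Dstep l}

/-- The two-sided step path `t ↦ ∑ i, x i 1_{[u i,1]}(t) - ∑ i, y i 1_{[v i,1]}(t)`. -/
def stepPath2 {j k : ℕ} (x u : Fin j → ℝ) (y v : Fin k → ℝ) : unitInterval → ℝ :=
  fun t => stepPath x u t - stepPath y v t

lemma isCadlag_stepPath2 {j k : ℕ} (x u : Fin j → ℝ) (y v : Fin k → ℝ) :
    IsCadlag (stepPath2 x u y v) := by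
  obtain ⟨h1, h2⟩ := isCadlag_stepPath x u
  obtain ⟨h1', h2'⟩ := isCadlag_stepPath y v
  constructor
  · intro t; exact (h1 t).sub (h1' t)
  · intro t
    obtain ⟨L, hL⟩ := h2 t
    obtain ⟨L', hL'⟩ := h2' t
    exact ⟨L - L', hL.sub hL'⟩

/-- The element of `D` with upward jumps `x` at times `u` and downward jumps `y`
at times `v`. -/
def stepD2 {j k : ℕ} (x u : Fin j → ℝ) (y v : Fin k → ℝ) : D :=
  ⟨stepPath2 x u y v, isCadlag_stepPath2 x u y v⟩

/-- `D_{j,k}`: step functions vanishing at the origin with exactly `j` upward jumps and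
`k` downward jumps. -/
def Dstep2 (j k : ℕ) : Set D :=
  {ξ | ∃ (x u : Fin j → ℝ) (y v : Fin k → ℝ),
    (∀ i, 0 < x i) ∧ (∀ i, 0 < y i) ∧
    (∀ i, 0 < u i ∧ u i ≤ 1) ∧ (∀ i, 0 < v i ∧ v i ≤ 1) ∧
    Function.Injective u ∧ Function.Injective v ∧ (∀ i i', u i ≠ v i') ∧
    ξ = stepD2 x u y v}

/-- `D_{<j,k} = ⋃_{(l,m) ∈ I_{<j,k}} D_{l,m}` (for tail indices `α`, `β`). -/
def Dlt2 (α β : ℝ) (j k : ℕ) : Set D :=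
  {ξ | ∃ l m : ℕ, (l, m) ≠ (j, k) ∧
    (α - 1) * l + (β - 1) * m ≤ (α - 1) * j + (β - 1) * k ∧ ξ ∈ Dstep2 l m}

/-- The limit measure `C_j = E[ν_α^j {x : ∑ i x i 1_{[U i,1]} ∈ ·}]` on `D`
(equal to the Dirac mass at the zero path when `j = 0`). -/
def Cmeas (γ : ℝ) (j : ℕ) : Measure D :=
  Measure.map (fun p : (Fin j → ℝ) × (Fin j → ℝ) => stepD p.1 p.2)
    ((nuPow γ j).prod (unifPow j))

/-- The limit measure
`C_{j,k} = E[ν_α^j × ν_β^k {(x,y) : ∑ i x i 1_{[U i,1]} - ∑ i y i 1_{[V i,1]} ∈ ·}]` on `D`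
(equal to the Dirac mass at the zero path when `(j,k) = (0,0)`). -/
def Cmeas2 (α β : ℝ) (j k : ℕ) : Measure D :=
  Measure.map (fun p : ((Fin j → ℝ) × (Fin j → ℝ)) × ((Fin k → ℝ) × (Fin k → ℝ)) =>
      stepD2 p.1.1 p.1.2 p.2.1 p.2.2)
    (((nuPow α j).prod (unifPow j)).prod ((nuPow β k).prod (unifPow k)))

lemma isCadlag_const (c : ℝ) : IsCadlag (fun _ => c) :=
  ⟨fun _ => tendsto_const_nhds, fun _ => ⟨c, tendsto_const_nhds⟩⟩

/-- Build an element of `D` from a function (with a junk default for non-càdlàg input). -/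
def mkD (f : unitInterval → ℝ) : D :=
  if h : IsCadlag f then ⟨f, h⟩ else ⟨fun _ => 0, isCadlag_const 0⟩

/-- `A_δ = {x : d(x, A) ≤ δ}` in `D`. -/
def thickenD (δ : ℝ) (A : Set D) : Set D := {x | ∀ ε > 0, ∃ a ∈ A, dJ1 a x < δ + ε}

/-- The normalizing constant `(n ν[n,∞))^j (n ν(-∞,-n])^k`, as an element of `ℝ≥0∞`. -/
def norm2 (ν : Measure ℝ) (n j k : ℕ) : ℝ≥0∞ :=
  ENNReal.ofReal ((((n : ℝ) * (ν (Set.Ici (n : ℝ))).toReal) ^ j) *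
    (((n : ℝ) * (ν (Set.Iic (-(n : ℝ)))).toReal) ^ k))

/-!
Both bounds come from a portmanteau argument for `M(S∖C)`-convergence on a pseudometric space:
as `A` is bounded away from `C`, the thickened indicators of `A` and of the complement of its
interior are admissible test functions for small radii, and letting the radius tend to `0` gives
the bounds; the upper one needs the limit measure to be finite away from `C`. For `C_{j,k}` this
holds because deleting the smallest jump of a path of `D_{j,k}` lands in `D_{<j,k}` at distance at
most that jump, so paths far from `D_{<j,k}` have all jumps large, a set of finite
`ν_α^j × ν_β^k`-measure. If `A` is also bounded away from `D_{l,m}`, then `C_{l,m}`, which lives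
on `D_{l,m}`, vanishes on the closure of `A`, and the upper bound gives convergence to `0`.
The general argument applies because the Skorokhod distance is a pseudometric inducing the
topology of `D`.
-/

open Metric

/-! ### Portmanteau bounds for `M(S∖C)`-convergence -/

section Indicator

variable {X : Type*} [MeasurableSpace X] {ν : Measure X} {f : X → ℝ≥0} {s : Set X}

lemma lintegral_le_measure_of_forall_notMem (hf : ∀ x, f x ≤ 1) (hs : MeasurableSet s)
    (hfs : ∀ x ∉ s, f x = 0) : ∫⁻ x, f x ∂ν ≤ ν s := by
  refine (lintegral_mono fun x => ?_).trans_eq (lintegral_indicator_one hs)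
  by_cases hx : x ∈ s
  · simpa [hx] using hf x
  · simp [hx, hfs x hx]

lemma measure_le_lintegral_of_forall_mem (hs : MeasurableSet s) (hfs : ∀ x ∈ s, f x = 1) :
    ν s ≤ ∫⁻ x, f x ∂ν := by
  refine (lintegral_indicator_one hs).symm.trans_le (lintegral_mono fun x => ?_)
  by_cases hx : x ∈ s
  · simp [hx, hfs x hx]
  · simp [hx]

end Indicator

lemma MeasureTheory.Measure.map_apply_le_of_ae {X Y : Type*} [MeasurableSpace X]
    [MeasurableSpace Y] {μ : Measure X} {f : X → Y} {s : Set Y} {t : Set X} (hs : MeasurableSet s)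
    (h : ∀ᵐ x ∂μ, f x ∈ s → x ∈ t) : μ.map f s ≤ μ t := by
  by_cases hf : AEMeasurable f μ
  · rw [Measure.map_apply_of_aemeasurable hf hs]
    exact measure_mono_ae h
  · simp [Measure.map_of_not_aemeasurable hf]

lemma IsOpen.iUnion_compl_thickening_compl {S : Type*} [PseudoMetricSpace S] {G : Set S}
    (hG : IsOpen G) :
    ⋃ m : ℕ, (thickening (1 / ((m : ℝ) + 1)) Gᶜ)ᶜ = G := by
  refine Subset.antisymm (iUnion_subset fun m x hx => ?_) fun x hx => ?_
  · by_contra hxG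
    exact hx (self_subset_thickening (by positivity) _ hxG)
  · obtain ⟨ε, hε, hball⟩ := Metric.isOpen_iff.1 hG x hx
    obtain ⟨m, hm⟩ := exists_nat_one_div_lt hε
    refine mem_iUnion.2 ⟨m, fun hxm => ?_⟩
    obtain ⟨z, hz, hxz⟩ := mem_thickening_iff.1 hxm
    exact hz (hball (by rw [Metric.mem_ball, dist_comm]; linarith))

lemma BddAway.mono_right {S : Type*} {ρ : S → S → ℝ} {A B B' : Set S} (h : BddAway ρ A B)
    (hB : B' ⊆ B) : BddAway ρ A B' :=
  let ⟨ε, hε, hAB⟩ := h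
  ⟨ε, hε, fun a ha b hb => hAB a ha b (hB hb)⟩

lemma BddAway.disjoint_closure_left {S : Type*} [PseudoMetricSpace S] {A B : Set S}
    (h : BddAway dist A B) : Disjoint (closure A) B := by
  obtain ⟨ε, hε, hAB⟩ := h
  refine disjoint_left.2 fun x hx hxB => ?_
  obtain ⟨a, ha, hxa⟩ := Metric.mem_closure_iff.1 hx ε hε
  linarith [hAB a ha x hxB, dist_comm x a]

section MConv

variable {S : Type*} [PseudoMetricSpace S] [MeasurableSpace S]
  {C A : Set S} {μ : ℕ → Measure S} {μlim : Measure S}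

lemma MConv.tendsto_lintegral (h : MConv dist C μ μlim) {f : S → ℝ≥0} (hf : Continuous f)
    (hf₁ : ∀ x, f x ≤ 1) (hA : BddAway dist A C) (hfA : ∀ x ∉ A, f x = 0) :
    Tendsto (fun n => ∫⁻ x, f x ∂μ n) atTop (𝓝 (∫⁻ x, f x ∂μlim)) := by
  obtain ⟨ε, hε, hAC⟩ := hA
  have hvanish : ∀ x, (∃ y ∈ C, dist y x < ε) → (f x : ℝ) = 0 := by
    rintro x ⟨y, hy, hyx⟩
    by_cases hx : x ∈ A
    · linarith [hAC x hx y hy, dist_comm x y]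
    · simp [hfA x hx]
  simpa using h (fun x => f x) (NNReal.continuous_coe.comp hf)
    ⟨1, fun x => by simpa using hf₁ x⟩ (fun x => (f x).2) ⟨ε, hε, hvanish⟩

variable [OpensMeasurableSpace S]

theorem MConv.measure_interior_le_liminf (h : MConv dist C μ μlim) (hA : BddAway dist A C) :
    μlim (interior A) ≤ liminf (fun n => μ n A) atTop := by
  have hmono : Monotone fun m : ℕ => (thickening (1 / ((m : ℝ) + 1)) (interior A)ᶜ)ᶜ :=
    fun m m' hm => compl_subset_compl.2 <| thickening_mono
      (one_div_le_one_div_of_le (by positivity) (by exact_mod_cast Nat.succ_le_succ hm)) _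
  rw [← isOpen_interior.iUnion_compl_thickening_compl, hmono.measure_iUnion]
  refine iSup_le fun m => ?_
  have hδ : (0 : ℝ) < 1 / (m + 1) := by positivity
  let f : S → ℝ≥0 := fun x => 1 - thickenedIndicator hδ (interior A)ᶜ x
  have hfA : ∀ x ∉ interior A, f x = 0 := fun x hx => by
    simp only [f, thickenedIndicator_one hδ _ (mem_compl hx), tsub_self]
  calc μlim (thickening (1 / ((m : ℝ) + 1)) (interior A)ᶜ)ᶜ ≤ ∫⁻ x, f x ∂μlim :=
        measure_le_lintegral_of_forall_mem isOpen_thickening.isClosed_compl.measurableSet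
          fun x hx => by simp only [f, thickenedIndicator_zero hδ _ hx, tsub_zero]
    _ = liminf (fun n => ∫⁻ x, f x ∂μ n) atTop :=
        ((h.tendsto_lintegral (continuous_const.sub (thickenedIndicator hδ _).continuous)
          (fun _ => tsub_le_self) hA fun x hx => hfA x (hx <| interior_subset ·)).liminf_eq).symm
    _ ≤ liminf (fun n => μ n A) atTop := liminf_le_liminf <| Eventually.of_forall fun n =>
        (lintegral_le_measure_of_forall_notMem (fun _ => tsub_le_self)
          isOpen_interior.measurableSet hfA).trans (measure_mono interior_subset)

theorem MConv.limsup_le_measure_closure (h : MConv dist C μ μlim) (hA : BddAway dist A C)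
    (hfin : ∀ r > 0, μlim {x | ¬ ∃ y ∈ C, dist y x < r} < ⊤) :
    limsup (fun n => μ n A) atTop ≤ μlim (closure A) := by
  obtain ⟨ε, hε, hAC⟩ := hA
  have hthick : ∀ δ, ∀ x ∈ thickening δ A, ∀ y ∈ C, ε - δ ≤ dist x y := by
    intro δ x hx y hy
    obtain ⟨a, ha, hxa⟩ := mem_thickening_iff.1 hx
    linarith [hAC a ha y hy, dist_triangle a x y, dist_comm a x]
  have key : ∀ δ ∈ Ioo 0 ε, limsup (fun n => μ n A) atTop ≤ μlim (thickening δ A) := by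
    rintro δ ⟨hδ, hδε⟩
    let f := thickenedIndicator hδ A
    have hf₀ : ∀ x ∉ thickening δ A, f x = 0 := fun x => thickenedIndicator_zero hδ A
    calc limsup (fun n => μ n A) atTop ≤ limsup (fun n => ∫⁻ x, f x ∂μ n) atTop :=
          limsup_le_limsup <| Eventually.of_forall fun n => (measure_mono subset_closure).trans <|
            measure_le_lintegral_of_forall_mem isClosed_closure.measurableSet
              fun x hx => thickenedIndicator_one_of_mem_closure hδ A hx
      _ = ∫⁻ x, f x ∂μlim := (h.tendsto_lintegral f.continuous (thickenedIndicator_le_one hδ A)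
          ⟨ε - δ, sub_pos.2 hδε, hthick δ⟩ hf₀).limsup_eq
      _ ≤ μlim (thickening δ A) := lintegral_le_measure_of_forall_notMem
          (thickenedIndicator_le_one hδ A) isOpen_thickening.measurableSet hf₀
  have hfin' : μlim (thickening (ε / 2) (closure A)) ≠ ⊤ := by
    refine ((measure_mono fun x hx => ?_).trans_lt (hfin _ (half_pos hε))).ne
    rw [thickening_closure] at hx
    rintro ⟨y, hy, hyx⟩
    linarith [hthick _ x hx y hy, dist_comm x y]
  have hlim := tendsto_measure_thickening_of_isClosed ⟨ε / 2, half_pos hε, hfin'⟩ isClosed_closure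
  simp only [thickening_closure] at hlim
  exact ge_of_tendsto hlim (eventually_of_mem (Ioo_mem_nhdsGT hε) key)

end MConv

/-! ### The Skorokhod pseudometric -/

lemma IsCadlag.exists_abs_le {f : unitInterval → ℝ} (hf : IsCadlag f) : ∃ M, ∀ t, |f t| ≤ M := by
  suffices Bornology.IsBounded (f '' univ) by
    obtain ⟨M, hM⟩ := isBounded_iff_forall_norm_le.1 this
    exact ⟨M, fun t => hM _ (mem_image_of_mem f (mem_univ t))⟩
  refine isCompact_univ.induction_on (p := fun s => Bornology.IsBounded (f '' s)) (by simp)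
    (fun s t hst ht => ht.subset (image_mono hst))
    (fun s t hs ht => by rw [image_union]; exact hs.union ht) fun t _ => ?_
  obtain ⟨L, hL⟩ := hf.2 t
  refine ⟨f ⁻¹' (Metric.ball (f t) 1 ∪ Metric.ball L 1), ?_,
    (Metric.isBounded_ball.union Metric.isBounded_ball).subset (image_preimage_subset _ _)⟩
  rw [nhdsWithin_univ, ← nhdsWithin_univ, ← Ici_union_Iio, nhdsWithin_union]
  exact mem_sup.2 ⟨hf.1 t (mem_of_superset (Metric.ball_mem_nhds _ one_pos) subset_union_left),
    hL (mem_of_superset (Metric.ball_mem_nhds _ one_pos) subset_union_right)⟩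

lemma id_mem_timeChanges : id ∈ TimeChanges :=
  ⟨continuous_id, strictMono_id, Function.bijective_id⟩

lemma comp_mem_timeChanges {l₁ l₂ : unitInterval → unitInterval}
    (h₁ : l₁ ∈ TimeChanges) (h₂ : l₂ ∈ TimeChanges) : l₁ ∘ l₂ ∈ TimeChanges :=
  ⟨h₁.1.comp h₂.1, h₁.2.1.comp h₂.2.1, h₁.2.2.comp h₂.2.2⟩

lemma exists_rightInverse_mem_timeChanges {l : unitInterval → unitInterval}
    (hl : l ∈ TimeChanges) : ∃ l' ∈ TimeChanges, ∀ t, l (l' t) = t := by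
  let e := hl.2.1.orderIsoOfSurjective l hl.2.2.2
  exact ⟨e.symm, ⟨e.symm.continuous, e.symm.strictMono, e.symm.bijective⟩, e.apply_symm_apply⟩

/-- The quantity `‖λ - id‖_∞ ⊔ ‖x ∘ λ - y‖_∞` whose infimum over time changes is `dJ1 x y`. -/
def j1Cost (x y : D) (l : unitInterval → unitInterval) : ℝ :=
  max (⨆ t : unitInterval, |(l t : ℝ) - (t : ℝ)|) (⨆ t : unitInterval, |x.toFun (l t) - y.toFun t|)

section j1Cost

variable {x y z : D} {l : unitInterval → unitInterval}

lemma abs_time_le_j1Cost (t : unitInterval) : |(l t : ℝ) - t| ≤ j1Cost x y l := by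
  refine le_max_of_le_left (le_ciSup (f := fun t : unitInterval => |(l t : ℝ) - t|) ⟨1, ?_⟩ t)
  rintro _ ⟨s, rfl⟩
  exact abs_sub_le_iff.2 ⟨by linarith [(l s).2.2, s.2.1], by linarith [(l s).2.1, s.2.2]⟩

lemma abs_sub_le_j1Cost (t : unitInterval) : |x.toFun (l t) - y.toFun t| ≤ j1Cost x y l := by
  obtain ⟨Mx, hMx⟩ := x.cadlag.exists_abs_le
  obtain ⟨My, hMy⟩ := y.cadlag.exists_abs_le
  refine le_max_of_le_right (le_ciSup (f := fun t => |x.toFun (l t) - y.toFun t|) ⟨Mx + My, ?_⟩ t)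
  rintro _ ⟨s, rfl⟩
  exact (abs_sub _ _).trans (add_le_add (hMx _) (hMy _))

lemma j1Cost_le {c : ℝ} (h₁ : ∀ t, |(l t : ℝ) - t| ≤ c)
    (h₂ : ∀ t, |x.toFun (l t) - y.toFun t| ≤ c) : j1Cost x y l ≤ c :=
  max_le (ciSup_le h₁) (ciSup_le h₂)

lemma j1Cost_nonneg : 0 ≤ j1Cost x y l :=
  (abs_nonneg _).trans (abs_time_le_j1Cost 0)

lemma dJ1_le_j1Cost (hl : l ∈ TimeChanges) : dJ1 x y ≤ j1Cost x y l :=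
  csInf_le ⟨0, forall_mem_image.2 fun _ _ => j1Cost_nonneg⟩ (mem_image_of_mem _ hl)

lemma le_dJ1 {c : ℝ} (h : ∀ l ∈ TimeChanges, c ≤ j1Cost x y l) : c ≤ dJ1 x y :=
  le_csInf (Set.Nonempty.image _ ⟨id, id_mem_timeChanges⟩) (forall_mem_image.2 h)

lemma dJ1_le_of_forall_abs_sub_le {c : ℝ} (hc : 0 ≤ c) (h : ∀ t, |x.toFun t - y.toFun t| ≤ c) :
    dJ1 x y ≤ c :=
  (dJ1_le_j1Cost id_mem_timeChanges).trans (j1Cost_le (by simpa using hc) h)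

lemma dJ1_self (x : D) : dJ1 x x = 0 :=
  le_antisymm (dJ1_le_of_forall_abs_sub_le le_rfl (by simp)) (le_dJ1 fun _ _ => j1Cost_nonneg)

lemma dJ1_comm (x y : D) : dJ1 x y = dJ1 y x := by
  suffices ∀ x y : D, dJ1 y x ≤ dJ1 x y from le_antisymm (this y x) (this x y)
  intro x y
  refine le_dJ1 fun l hl => ?_
  obtain ⟨l', hl', hll'⟩ := exists_rightInverse_mem_timeChanges hl
  refine (dJ1_le_j1Cost hl').trans (j1Cost_le (fun t => ?_) fun t => ?_)
  · simpa [hll', abs_sub_comm] using abs_time_le_j1Cost (x := x) (y := y) (l := l) (l' t)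
  · simpa [hll', abs_sub_comm] using abs_sub_le_j1Cost (x := x) (y := y) (l := l) (l' t)

lemma dJ1_triangle (x y z : D) : dJ1 x z ≤ dJ1 x y + dJ1 y z := by
  have key : ∀ l₁ ∈ TimeChanges, ∀ l₂ ∈ TimeChanges,
      dJ1 x z ≤ j1Cost x y l₁ + j1Cost y z l₂ := fun l₁ h₁ l₂ h₂ =>
    (dJ1_le_j1Cost (comp_mem_timeChanges h₁ h₂)).trans <| j1Cost_le
      (fun t => (abs_sub_le ((l₁ (l₂ t) : unitInterval) : ℝ) (l₂ t) t).trans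
        (add_le_add (abs_time_le_j1Cost (l₂ t)) (abs_time_le_j1Cost t)))
      (fun t => (abs_sub_le (x.toFun (l₁ (l₂ t))) (y.toFun (l₂ t)) _).trans
        (add_le_add (abs_sub_le_j1Cost (l₂ t)) (abs_sub_le_j1Cost t)))
  have h : ∀ l₂ ∈ TimeChanges, dJ1 x z - j1Cost y z l₂ ≤ dJ1 x y := fun l₂ h₂ =>
    le_dJ1 fun l₁ h₁ => by linarith [key l₁ h₁ l₂ h₂]
  linarith [le_dJ1 (x := y) (y := z) (c := dJ1 x z - dJ1 x y) fun l₂ h₂ => by linarith [h l₂ h₂]]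

end j1Cost

/-- The pseudometric `dJ1`, before its topology is identified with the one of `D`. -/
abbrev dJ1PseudoMetric : PseudoMetricSpace D where
  dist := dJ1
  dist_self := dJ1_self
  dist_comm := dJ1_comm
  dist_triangle := dJ1_triangle

lemma topology_eq_dJ1PseudoMetric :
    (inferInstance : TopologicalSpace D) = dJ1PseudoMetric.toUniformSpace.toTopologicalSpace := by
  refine le_antisymm (fun U hU => ?_) (le_generateFrom ?_)
  · let := dJ1PseudoMetric
    rw [Metric.isOpen_iff] at hU
    choose! ε hε hball using hU
    have hU : U = ⋃ x ∈ U, {y | dJ1 x y < ε x} := by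
      refine Subset.antisymm (fun x hx => mem_biUnion hx (by simpa [dJ1_self] using hε x hx)) ?_
      refine iUnion₂_subset fun x hx y hy => hball x hx ?_
      rw [Metric.mem_ball, dist_comm]
      exact hy
    rw [hU]
    exact isOpen_biUnion fun x _ => TopologicalSpace.isOpen_generateFrom_of_mem ⟨x, ε x, rfl⟩
  · rintro _ ⟨x, ε, rfl⟩
    let := dJ1PseudoMetric
    convert Metric.isOpen_ball (x := x) (ε := ε) using 1
    ext y
    show dJ1 x y < ε ↔ dJ1 y x < ε
    rw [dJ1_comm]

instance : PseudoMetricSpace D := dJ1PseudoMetric.replaceTopology topology_eq_dJ1PseudoMetric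

/-! ### The limit measures `C_{j,k}` -/

instance : BorelSpace D := ⟨rfl⟩

instance (γ : ℝ) : SigmaFinite (nuPareto γ) := by
  unfold nuPareto; infer_instance

instance (γ : ℝ) (j : ℕ) : SigmaFinite (nuPow γ j) := by
  unfold nuPow; infer_instance

instance (j : ℕ) : IsFiniteMeasure (unifPow j) := by
  unfold unifPow; infer_instance

lemma measurableSet_ordCone (j : ℕ) : MeasurableSet (ordCone j) := by
  unfold ordCone; measurability

lemma ae_nuPareto_pos (γ : ℝ) : ∀ᵐ s ∂nuPareto γ, 0 < s :=
  (withDensity_absolutelyContinuous _ _).ae_le (ae_restrict_mem measurableSet_Ioi)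

lemma nuPareto_Ici_lt_top {γ r : ℝ} (hγ : 0 < γ) (hr : 0 < r) : nuPareto γ (Ici r) < ⊤ := by
  rw [nuPareto, withDensity_apply _ measurableSet_Ici, Measure.restrict_restrict measurableSet_Ici,
    inter_eq_left.2 (Ici_subset_Ioi.2 hr)]
  have h : IntegrableOn (fun s : ℝ => γ * s ^ (-γ - 1)) (Ioi (r / 2)) :=
    (integrableOn_Ioi_rpow_of_lt (by linarith) (half_pos hr)).const_mul γ
  exact (h.mono_set (Ici_subset_Ioi.2 (half_lt_self hr))).lintegral_lt_top

lemma ae_nuPow (γ : ℝ) (j : ℕ) : ∀ᵐ x ∂nuPow γ j, (∀ i, 0 < x i) ∧ Antitone x := by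
  have hpos : ∀ᵐ x ∂Measure.pi fun _ : Fin j => nuPareto γ, ∀ i, 0 < x i :=
    ae_all_iff.2 fun i => Measure.tendsto_eval_ae_ae (ae_nuPareto_pos γ)
  filter_upwards [ae_restrict_of_ae hpos, ae_restrict_mem (measurableSet_ordCone j)] with x h1 h2
  exact ⟨h1, h2⟩

lemma nuPow_lt_top {γ r : ℝ} (hγ : 0 < γ) (hr : 0 < r) (j : ℕ) :
    nuPow γ j {x | ∀ i, r ≤ x i} < ⊤ := by
  have : {x : Fin j → ℝ | ∀ i, r ≤ x i} = univ.pi fun _ => Ici r := by ext; simp [Pi.le_def]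
  calc nuPow γ j {x | ∀ i, r ≤ x i}
      ≤ (Measure.pi fun _ : Fin j => nuPareto γ) (univ.pi fun _ => Ici r) :=
        this ▸ Measure.restrict_apply_le _ _
    _ < ⊤ := by
        rw [Measure.pi_pi]
        exact ENNReal.prod_lt_top fun _ _ => nuPareto_Ici_lt_top hγ hr

lemma ae_unif_mem_Ioc : ∀ᵐ s ∂volume.restrict (Icc (0 : ℝ) 1), s ∈ Ioc (0 : ℝ) 1 := by
  filter_upwards [ae_restrict_mem measurableSet_Icc,
    ae_restrict_of_ae (measure_eq_zero_iff_ae_notMem.1 (Real.volume_singleton (a := 0)))]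
    with s hs h0
  exact ⟨lt_of_le_of_ne hs.1 (Ne.symm h0), hs.2⟩

lemma ae_unifPow_notMem {s : Set ℝ} (hs : s.Countable) (j : ℕ) :
    ∀ᵐ u ∂unifPow j, ∀ i, u i ∉ s :=
  ae_all_iff.2 fun _ => Measure.tendsto_eval_ae_ae
    (measure_eq_zero_iff_ae_notMem.1 (hs.measure_zero _))

lemma volume_setOf_apply_eq_apply {ι : Type*} [Fintype ι] {i i' : ι} (h : i ≠ i') :
    volume {u : ι → ℝ | u i = u i'} = 0 := by
  let L : (ι → ℝ) →ₗ[ℝ] ℝ := LinearMap.proj (R := ℝ) (φ := fun _ => ℝ) i - LinearMap.proj i'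
  have hL : {u : ι → ℝ | u i = u i'} = LinearMap.ker L := by
    ext u; simp [L, sub_eq_zero]
  rw [hL]
  refine Measure.addHaar_submodule _ _ fun htop => ?_
  have := htop ▸ Submodule.mem_top (x := Pi.single i (1 : ℝ))
  simp [L, h.symm] at this

lemma ae_unifPow (j : ℕ) :
    ∀ᵐ u ∂unifPow j, (∀ i, u i ∈ Ioc (0 : ℝ) 1) ∧ Function.Injective u := by
  have hac : unifPow j ≪ volume := by
    rw [unifPow, ← Measure.restrict_pi_pi]
    exact Measure.absolutelyContinuous_of_le Measure.restrict_le_self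
  have hdiag : ∀ i i', ∀ᵐ u ∂unifPow j, u i = u i' → i = i' := fun i i' => by
    by_cases h : i = i'
    · exact ae_of_all _ fun _ _ => h
    · exact hac.ae_le <| (measure_eq_zero_iff_ae_notMem.1 (volume_setOf_apply_eq_apply h)).mono
        fun u hu heq => (hu heq).elim
  have hIoc : ∀ᵐ u ∂unifPow j, ∀ i, u i ∈ Ioc (0 : ℝ) 1 :=
    ae_all_iff.2 fun _ => Measure.tendsto_eval_ae_ae ae_unif_mem_Ioc
  filter_upwards [hIoc, ae_all_iff.2 fun i => ae_all_iff.2 (hdiag i)] with u h1 h2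
  exact ⟨h1, fun i i' => h2 i i'⟩

/-- `((x, u), (y, v))`: sizes and times of `j` upward jumps and of `k` downward jumps. -/
abbrev JumpConfig (j k : ℕ) : Type := ((Fin j → ℝ) × (Fin j → ℝ)) × ((Fin k → ℝ) × (Fin k → ℝ))

def jumpMeasure (α β : ℝ) (j k : ℕ) : Measure (JumpConfig j k) :=
  ((nuPow α j).prod (unifPow j)).prod ((nuPow β k).prod (unifPow k))

def jumpPath {j k : ℕ} (p : JumpConfig j k) : D := stepD2 p.1.1 p.1.2 p.2.1 p.2.2

lemma Cmeas2_eq_map (α β : ℝ) (j k : ℕ) :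
    Cmeas2 α β j k = (jumpMeasure α β j k).map jumpPath := rfl

structure IsGenericConfig {j k : ℕ} (x u : Fin j → ℝ) (y v : Fin k → ℝ) : Prop where
  pos_up : ∀ i, 0 < x i
  pos_down : ∀ i, 0 < y i
  mem_up : ∀ i, u i ∈ Ioc (0 : ℝ) 1
  mem_down : ∀ i, v i ∈ Ioc (0 : ℝ) 1
  injective_up : Function.Injective u
  injective_down : Function.Injective v
  ne : ∀ i i', u i ≠ v i'
  antitone_up : Antitone x
  antitone_down : Antitone y

namespace IsGenericConfig

variable {j k : ℕ} {y v : Fin k → ℝ}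

lemma stepD2_mem {x u : Fin j → ℝ} (h : IsGenericConfig x u y v) : stepD2 x u y v ∈ Dstep2 j k :=
  ⟨x, u, y, v, h.pos_up, h.pos_down, h.mem_up, h.mem_down, h.injective_up, h.injective_down,
    h.ne, rfl⟩

lemma init_up {x u : Fin (j + 1) → ℝ} (h : IsGenericConfig x u y v) :
    IsGenericConfig (x ∘ Fin.castSucc) (u ∘ Fin.castSucc) y v :=
  ⟨fun _ => h.pos_up _, h.pos_down, fun _ => h.mem_up _, h.mem_down,
    h.injective_up.comp (Fin.castSucc_injective _), h.injective_down, fun _ => h.ne _,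
    h.antitone_up.comp_monotone Fin.strictMono_castSucc.monotone, h.antitone_down⟩

lemma symm {x u : Fin j → ℝ} (h : IsGenericConfig x u y v) : IsGenericConfig y v x u :=
  ⟨h.pos_down, h.pos_up, h.mem_down, h.mem_up, h.injective_down, h.injective_up,
    fun i i' => (h.ne i' i).symm, h.antitone_down, h.antitone_up⟩

end IsGenericConfig

lemma stepPath_sub_stepPath_init {j : ℕ} (x u : Fin (j + 1) → ℝ) (t : unitInterval) :
    stepPath x u t - stepPath (x ∘ Fin.castSucc) (u ∘ Fin.castSucc) t =
      if u (Fin.last j) ≤ t then x (Fin.last j) else 0 := by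
  simp [stepPath, Fin.sum_univ_castSucc]

lemma abs_ite_le {p : Prop} [Decidable p] {c : ℝ} (hc : 0 ≤ c) : |if p then c else 0| ≤ c := by
  split_ifs <;> simp [abs_of_nonneg, hc]

section Deletion

variable {j k : ℕ}

lemma dist_stepD2_init_up_le (x u : Fin (j + 1) → ℝ) (y v : Fin k → ℝ)
    (hx : 0 ≤ x (Fin.last j)) :
    dist (stepD2 (x ∘ Fin.castSucc) (u ∘ Fin.castSucc) y v) (stepD2 x u y v) ≤ x (Fin.last j) :=
  dJ1_le_of_forall_abs_sub_le hx fun t => by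
    rw [abs_sub_comm]
    convert abs_ite_le hx using 2
    rw [← stepPath_sub_stepPath_init]
    simp only [stepD2, stepPath2]
    ring

lemma dist_stepD2_init_down_le (x u : Fin j → ℝ) (y v : Fin (k + 1) → ℝ)
    (hy : 0 ≤ y (Fin.last k)) :
    dist (stepD2 x u (y ∘ Fin.castSucc) (v ∘ Fin.castSucc)) (stepD2 x u y v) ≤ y (Fin.last k) :=
  dJ1_le_of_forall_abs_sub_le hy fun t => by
    convert abs_ite_le hy using 2
    rw [← stepPath_sub_stepPath_init]
    simp only [stepD2, stepPath2]
    ring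

variable {α β : ℝ} {x u : Fin j → ℝ} {y v : Fin k → ℝ}

/-- Removing the smallest jump of a generic configuration lands in `D_{<j,k}`, at distance at most
the size of that jump. -/
lemma IsGenericConfig.le_of_forall_le_dist (hα : 1 ≤ α) (hβ : 1 ≤ β)
    (h : IsGenericConfig x u y v) {r : ℝ} (hr : ∀ b ∈ Dlt2 α β j k, r ≤ dist b (stepD2 x u y v)) :
    (∀ i, r ≤ x i) ∧ ∀ i, r ≤ y i := by
  constructor
  · cases j with
    | zero => exact fun i => i.elim0
    | succ j =>
      exact fun i => (hr _ ⟨j, k, by simp, by push_cast; linarith, h.init_up.stepD2_mem⟩).trans <|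
        (dist_stepD2_init_up_le x u y v (h.pos_up _).le).trans (h.antitone_up (Fin.le_last i))
  · cases k with
    | zero => exact fun i => i.elim0
    | succ k =>
      exact fun i => (hr _ ⟨j, k, by simp, by push_cast; linarith,
        h.symm.init_up.symm.stepD2_mem⟩).trans <|
        (dist_stepD2_init_down_le x u y v (h.pos_down _).le).trans (h.antitone_down (Fin.le_last i))

end Deletion

lemma ae_isGenericConfig (α β : ℝ) (j k : ℕ) :
    ∀ᵐ p ∂jumpMeasure α β j k, IsGenericConfig p.1.1 p.1.2 p.2.1 p.2.2 := by
  have hup : ∀ᵐ p ∂jumpMeasure α β j k, (∀ i, 0 < p.1.1 i) ∧ Antitone p.1.1 :=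
    Measure.quasiMeasurePreserving_fst.ae (Measure.quasiMeasurePreserving_fst.ae (ae_nuPow α j))
  have hdown : ∀ᵐ p ∂jumpMeasure α β j k, (∀ i, 0 < p.2.1 i) ∧ Antitone p.2.1 :=
    Measure.quasiMeasurePreserving_snd.ae (Measure.quasiMeasurePreserving_fst.ae (ae_nuPow β k))
  have htimes_up : ∀ᵐ p ∂jumpMeasure α β j k,
      (∀ i, p.1.2 i ∈ Ioc (0 : ℝ) 1) ∧ Function.Injective p.1.2 :=
    Measure.quasiMeasurePreserving_fst.ae (Measure.quasiMeasurePreserving_snd.ae (ae_unifPow j))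
  have htimes_down : ∀ᵐ p ∂jumpMeasure α β j k,
      (∀ i, p.2.2 i ∈ Ioc (0 : ℝ) 1) ∧ Function.Injective p.2.2 :=
    Measure.quasiMeasurePreserving_snd.ae (Measure.quasiMeasurePreserving_snd.ae (ae_unifPow k))
  -- given the upward jump times, the downward ones a.e. avoid the finitely many values they take
  have hne : ∀ᵐ p ∂jumpMeasure α β j k, ∀ i i', p.1.2 i ≠ p.2.2 i' := by
    refine (Measure.ae_prod_iff_ae_ae (by measurability)).2 (ae_of_all _ fun a => ?_)
    filter_upwards [Measure.quasiMeasurePreserving_snd.ae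
      (ae_unifPow_notMem (finite_range a.2).countable k)] with b hb i i' h
    exact hb i' ⟨i, h⟩
  filter_upwards [hup, hdown, htimes_up, htimes_down, hne] with p h₁ h₂ h₃ h₄ h₅
  exact ⟨h₁.1, h₂.1, h₃.1, h₄.1, h₃.2, h₄.2, h₅, h₁.2, h₂.2⟩

lemma Cmeas2_far_from_Dlt2_lt_top {α β : ℝ} (hα : 1 ≤ α) (hβ : 1 ≤ β) (j k : ℕ) {r : ℝ}
    (hr : 0 < r) : Cmeas2 α β j k {x | ¬ ∃ y ∈ Dlt2 α β j k, dist y x < r} < ⊤ := by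
  have hmeas : MeasurableSet {x : D | ¬ ∃ y ∈ Dlt2 α β j k, dist y x < r} := by
    convert (isOpen_thickening (δ := r) (E := Dlt2 α β j k)).isClosed_compl.measurableSet
    ext x
    simp [mem_thickening_iff, dist_comm]
  rw [Cmeas2_eq_map]
  calc (jumpMeasure α β j k).map jumpPath {x | ¬ ∃ y ∈ Dlt2 α β j k, dist y x < r}
      ≤ jumpMeasure α β j k (({x | ∀ i, r ≤ x i} ×ˢ univ) ×ˢ ({y | ∀ i, r ≤ y i} ×ˢ univ)) :=
        Measure.map_apply_le_of_ae hmeas <| (ae_isGenericConfig α β j k).mono fun p hp hfar => by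
          obtain ⟨hx, hy⟩ :=
            hp.le_of_forall_le_dist hα hβ fun b hb => not_lt.1 fun h => hfar ⟨b, hb, h⟩
          exact ⟨⟨hx, trivial⟩, hy, trivial⟩
    _ < ⊤ := by
        simp only [jumpMeasure, Measure.prod_prod]
        exact ENNReal.mul_lt_top
          (ENNReal.mul_lt_top (nuPow_lt_top (by linarith) hr j) (measure_lt_top _ _))
          (ENNReal.mul_lt_top (nuPow_lt_top (by linarith) hr k) (measure_lt_top _ _))

lemma Cmeas2_eq_zero_of_disjoint {α β : ℝ} {j k : ℕ} {s : Set D} (hs : MeasurableSet s)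
    (hdisj : Disjoint s (Dstep2 j k)) : Cmeas2 α β j k s = 0 := by
  rw [Cmeas2_eq_map]
  exact nonpos_iff_eq_zero.1 <| (Measure.map_apply_le_of_ae (t := ∅) hs <|
    (ae_isGenericConfig α β j k).mono fun _ hp hps =>
      disjoint_left.1 hdisj hps hp.stepD2_mem).trans_eq measure_empty

theorem two_sided_bounds_of_M_convergence_general
    {Ω : Type} [MeasurableSpace Ω] (P : Measure Ω)
    (ν : Measure ℝ) (α β : ℝ) (hα : 1 < α) (hβ : 1 < β)
    (Y : ℕ → Ω → D) (hY : ∀ n, Measurable (Y n))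
    (hconv : ∀ j k : ℕ,
      MConv dJ1 (Dlt2 α β j k)
        (fun n => (norm2 ν n j k)⁻¹ • Measure.map (Y n) P) (Cmeas2 α β j k))
    (A : Set D) (hA : MeasurableSet A) :
    (∀ j k : ℕ,
      (Dstep2 j k ∩ A).Nonempty →
      (∀ l m : ℕ, (Dstep2 l m ∩ A).Nonempty →
        (α - 1) * j + (β - 1) * k ≤ (α - 1) * l + (β - 1) * m) →
      BddAway dJ1 A (Dlt2 α β j k) →
      (Cmeas2 α β j k (interior A) ≤
          Filter.liminf (fun n => (norm2 ν n j k)⁻¹ * P {ω | Y n ω ∈ A}) Filter.atTop ∧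
        Filter.limsup (fun n => (norm2 ν n j k)⁻¹ * P {ω | Y n ω ∈ A}) Filter.atTop ≤
          Cmeas2 α β j k (closure A))) ∧
    ((¬ ∃ j k : ℕ, (Dstep2 j k ∩ A).Nonempty ∧
        ∀ l m : ℕ, (Dstep2 l m ∩ A).Nonempty →
          (α - 1) * j + (β - 1) * k ≤ (α - 1) * l + (β - 1) * m) →
      ∀ l m : ℕ, (l, m) ≠ (0, 0) →
        BddAway dJ1 A (Dlt2 α β l m ∪ Dstep2 l m) →
        Filter.Tendsto (fun n => (norm2 ν n l m)⁻¹ * P {ω | Y n ω ∈ A})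
          Filter.atTop (nhds 0)) := by
  have hμ : ∀ j k, (fun n => (norm2 ν n j k)⁻¹ * P {ω | Y n ω ∈ A}) =
      fun n => ((norm2 ν n j k)⁻¹ • P.map (Y n)) A := fun j k => funext fun n => by
    rw [Measure.smul_apply, Measure.map_apply (hY n) hA, smul_eq_mul]
    rfl
  have hfin := fun j k r => Cmeas2_far_from_Dlt2_lt_top (r := r) hα.le hβ.le j k
  refine ⟨fun j k _ _ hAway => ?_, fun _ l m _ hAway => ?_⟩
  · rw [hμ]
    exact ⟨(hconv j k).measure_interior_le_liminf hAway,
      (hconv j k).limsup_le_measure_closure hAway (hfin j k)⟩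
  · have hlimsup := (hconv l m).limsup_le_measure_closure
      (hAway.mono_right subset_union_left) (hfin l m)
    rw [Cmeas2_eq_zero_of_disjoint isClosed_closure.measurableSet
      (hAway.mono_right subset_union_right).disjoint_closure_left] at hlimsup
    rw [hμ]
    exact tendsto_of_le_liminf_of_limsup_le zero_le hlimsup

/-- If `Yₙ` satisfies the two-sided `𝕄`-convergence for every `(j,k)`,
then the two-sided sample-path large deviation bounds hold for `Yₙ`. -/
theorem two_sided_bounds_of_M_convergence
    {Ω : Type} [MeasurableSpace Ω] (P : Measure Ω) [IsProbabilityMeasure P]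
    (ν : Measure ℝ) (α β : ℝ) (hα : 1 < α) (hβ : 1 < β)
    (hregp : RegVarying (fun s => (ν (Set.Ici s)).toReal) (-α))
    (hregm : RegVarying (fun s => (ν (Set.Iic (-s))).toReal) (-β))
    (Y : ℕ → Ω → D) (hY : ∀ n, Measurable (Y n))
    (hconv : ∀ j k : ℕ,
      MConv dJ1 (Dlt2 α β j k)
        (fun n => (norm2 ν n j k)⁻¹ • Measure.map (Y n) P) (Cmeas2 α β j k))
    (A : Set D) (hA : MeasurableSet A) :
    (∀ j k : ℕ,
      (Dstep2 j k ∩ A).Nonempty →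
      (∀ l m : ℕ, (Dstep2 l m ∩ A).Nonempty →
        (α - 1) * j + (β - 1) * k ≤ (α - 1) * l + (β - 1) * m) →
      BddAway dJ1 A (Dlt2 α β j k) →
      (Cmeas2 α β j k (interior A) ≤
          Filter.liminf (fun n => (norm2 ν n j k)⁻¹ * P {ω | Y n ω ∈ A}) Filter.atTop ∧
        Filter.limsup (fun n => (norm2 ν n j k)⁻¹ * P {ω | Y n ω ∈ A}) Filter.atTop ≤
          Cmeas2 α β j k (closure A))) ∧
    ((¬ ∃ j k : ℕ, (Dstep2 j k ∩ A).Nonempty ∧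
        ∀ l m : ℕ, (Dstep2 l m ∩ A).Nonempty →
          (α - 1) * j + (β - 1) * k ≤ (α - 1) * l + (β - 1) * m) →
      ∀ l m : ℕ, (l, m) ≠ (0, 0) →
        BddAway dJ1 A (Dlt2 α β l m ∪ Dstep2 l m) →
        Filter.Tendsto (fun n => (norm2 ν n l m)⁻¹ * P {ω | Y n ω ∈ A})
          Filter.atTop (nhds 0)) :=
  two_sided_bounds_of_M_convergence_general P ν α β hα hβ Y hY hconv A hA

end
end

section
/- Let Z be a Lévy process (a càdlàg process with Z(0) = 0 and stationary independent increments). Then for every n ≥ 0 and every x > 0, P(sup_{t∈[0,n]} |Z(t)| ≥ x) ≤ 3 sup_{t∈[0,n]} P(|Z(t)| ≥ x/3). -/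
open MeasureTheory Filter Topology Set ProbabilityTheory
open scoped ENNReal NNReal Classical

noncomputable section

/-!
Discretize first: by right-continuity, if `|Z t| > 2x/3` for some `t ∈ [0, n]` then the same
holds at a dyadic point `j n / 2^m ≥ t` close to `t`, and the dyadic events increase in `m`, so it
suffices to bound `P(max_{j ≤ k} |S_j| > 2c)` for the partial sums `S_j = Z(t_j)` along a finite
grid, with `c = x/3`. This is the Ottaviani–Etemadi argument: split according to the first index
`i` with `|S_i| > 2c`. On that event either `|S_k| ≥ c`, or `|S_k - S_i| ≥ c`; the first index
event depends only on the increments before `i`, hence is independent of `S_k - S_i`, whose law is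
that of some `Z t` by stationarity. Summing over the disjoint first-index events gives
`P(max |S_j| > 2c) ≤ P(|S_k| ≥ c) + sup_t P(|Z t| ≥ c) ≤ 2 sup_t P(|Z t| ≥ c)`.
-/

section MaximalInequality

variable {Ω : Type*} {S : ℕ → Ω → ℝ}

def firstExceedance (S : ℕ → Ω → ℝ) (r : ℝ) (i : ℕ) : Set Ω :=
  {ω | r < |S i ω| ∧ ∀ j < i, |S j ω| ≤ r}

lemma pairwise_disjoint_firstExceedance (r : ℝ) :
    Pairwise (Function.onFun Disjoint (firstExceedance S r)) := by
  intro i i' hne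
  wlog h : i < i' generalizing i i'
  · exact (this hne.symm (hne.symm.lt_of_le (not_lt.mp h))).symm
  exact Set.disjoint_left.mpr fun ω h₁ h₂ => (h₂.2 i h).not_gt h₁.1

lemma setOf_exists_lt_abs_subset_biUnion_firstExceedance (r : ℝ) (k : ℕ) :
    {ω | ∃ j ≤ k, r < |S j ω|} ⊆ ⋃ i ∈ Finset.range (k + 1), firstExceedance S r i := by
  rintro ω ⟨j, hjk, hj⟩
  have hex : ∃ j, r < |S j ω| := ⟨j, hj⟩
  exact Set.mem_biUnion (Finset.mem_range_succ_iff.mpr ((Nat.find_le hj).trans hjk))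
    ⟨Nat.find_spec hex, fun j' hj' => not_lt.mp (Nat.find_min hex hj')⟩

lemma measurableSet_firstExceedance {m : MeasurableSpace Ω} {r : ℝ} {i : ℕ}
    (hS : ∀ j ≤ i, Measurable[m] (S j)) : MeasurableSet[m] (firstExceedance S r i) := by
  have : firstExceedance S r i =
      {ω | r < |S i ω|} ∩ ⋂ j ∈ Finset.range i, {ω | |S j ω| ≤ r} := by
    ext; simp [firstExceedance]
  rw [this]
  exact (measurableSet_lt measurable_const (hS i le_rfl).abs).inter <|
    .biInter (Finset.range i).countable_toSet fun j hj =>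
      measurableSet_le (hS j (Finset.mem_range.mp hj).le).abs measurable_const

theorem measure_exists_lt_abs_le_add [MeasurableSpace Ω] {P : Measure Ω} [IsProbabilityMeasure P]
    {k : ℕ} {c : ℝ} {A : ℝ≥0∞} (hS : ∀ j, Measurable (S j))
    (hindep : ∀ i ≤ k, Indep (⨆ j ≤ i, MeasurableSpace.comap (S j) inferInstance)
      (MeasurableSpace.comap (fun ω => S k ω - S i ω) inferInstance) P)
    (hA : ∀ i ≤ k, P {ω | c ≤ |S k ω - S i ω|} ≤ A) :
    P {ω | ∃ j ≤ k, 2 * c < |S j ω|} ≤ P {ω | c ≤ |S k ω|} + A := by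
  set E := firstExceedance S (2 * c)
  set F := {ω | c ≤ |S k ω|}
  have hE_meas i : MeasurableSet (E i) := measurableSet_firstExceedance fun j _ => hS j
  have hE_disj : (↑(Finset.range (k + 1)) : Set ℕ).PairwiseDisjoint E :=
    (pairwise_disjoint_firstExceedance _).set_pairwise _
  have hE_le i (hi : i ≤ k) : P (E i) ≤ P (E i ∩ F) + P (E i) * A := by
    have hsplit : E i ⊆ (E i ∩ F) ∪ (E i ∩ {ω | c ≤ |S k ω - S i ω|}) := by
      intro ω hω
      by_cases h : c ≤ |S k ω|
      · exact .inl ⟨hω, h⟩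
      · have := abs_sub_abs_le_abs_sub (S i ω) (S k ω)
        rw [abs_sub_comm] at this
        exact .inr ⟨hω, by simp only [mem_ofPred_eq] at h ⊢; linarith [hω.1]⟩
    have hE_past : MeasurableSet[⨆ j ≤ i, MeasurableSpace.comap (S j) inferInstance] (E i) :=
      measurableSet_firstExceedance fun j hj =>
        Measurable.of_comap_le
          (le_iSup₂ (f := fun j (_ : j ≤ i) => MeasurableSpace.comap (S j) inferInstance) j hj)
    have hF_future : MeasurableSet[MeasurableSpace.comap (fun ω => S k ω - S i ω) inferInstance]
        {ω | c ≤ |S k ω - S i ω|} :=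
      ⟨{y | c ≤ |y|}, measurableSet_le measurable_const measurable_abs, rfl⟩
    calc P (E i) ≤ P (E i ∩ F) + P (E i ∩ {ω | c ≤ |S k ω - S i ω|}) :=
          (measure_mono hsplit).trans (measure_union_le _ _)
      _ = P (E i ∩ F) + P (E i) * P {ω | c ≤ |S k ω - S i ω|} := by
          rw [(Indep_iff _ _ P).mp (hindep i hi) _ _ hE_past hF_future]
      _ ≤ P (E i ∩ F) + P (E i) * A := by gcongr; exact hA i hi
  calc P {ω | ∃ j ≤ k, 2 * c < |S j ω|}
      ≤ ∑ i ∈ Finset.range (k + 1), P (E i) :=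
        (measure_mono (setOf_exists_lt_abs_subset_biUnion_firstExceedance _ k)).trans
          (measure_biUnion_finset_le _ _)
    _ ≤ ∑ i ∈ Finset.range (k + 1), (P (E i ∩ F) + P (E i) * A) :=
        Finset.sum_le_sum fun i hi => hE_le i (Finset.mem_range_succ_iff.mp hi)
    _ = P (⋃ i ∈ Finset.range (k + 1), E i ∩ F) +
          P (⋃ i ∈ Finset.range (k + 1), E i) * A := by
        rw [Finset.sum_add_distrib, ← Finset.sum_mul, measure_biUnion_finset hE_disj
          fun i _ => hE_meas i, measure_biUnion_finset
          (hE_disj.mono fun _ => Set.inter_subset_left) fun i _ => (hE_meas i).inter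
          (measurableSet_le measurable_const (hS k).abs)]
    _ ≤ P F + 1 * A := by
        gcongr
        · exact Set.iUnion₂_subset fun _ _ => Set.inter_subset_right
        · exact prob_le_one
    _ = P F + A := by rw [one_mul]

lemma measurable_sub_of_measurable_increments {m : MeasurableSpace Ω} {a b : ℕ} (hab : a ≤ b)
    (h : ∀ l, a ≤ l → l < b → Measurable[m] fun ω => S (l + 1) ω - S l ω) :
    Measurable[m] fun ω => S b ω - S a ω := by
  induction b, hab using Nat.le_induction with
  | base => simpa only [sub_self] using measurable_const
  | succ b hab ih =>
    have hsum : (fun ω => S (b + 1) ω - S a ω) =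
        fun ω => (S (b + 1) ω - S b ω) + (S b ω - S a ω) := by
      funext ω; ring
    rw [hsum]
    exact (h b hab b.lt_succ_self).add (ih fun l hal hlb => h l hal (hlb.trans b.lt_succ_self))

lemma indep_iSup_comap_of_iIndepFun_increments [MeasurableSpace Ω] {P : Measure Ω}
    (hS : ∀ j, Measurable (S j)) (h0 : ∀ ω, S 0 ω = 0) {k : ℕ}
    (hinc : iIndepFun (fun (l : Fin k) ω => S (l + 1) ω - S l ω) P) {i : ℕ} (hi : i ≤ k) :
    Indep (⨆ j ≤ i, MeasurableSpace.comap (S j) inferInstance)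
      (MeasurableSpace.comap (fun ω => S k ω - S i ω) inferInstance) P := by
  set σ : Fin k → MeasurableSpace Ω := fun l => MeasurableSpace.comap
    (fun ω => S (l + 1) ω - S l ω) inferInstance
  have hσ l (hl : l < k) {t : Set (Fin k)} (hlt : ⟨l, hl⟩ ∈ t) :
      Measurable[⨆ l' ∈ t, σ l'] fun ω => S (l + 1) ω - S l ω :=
    Measurable.of_comap_le (le_iSup₂ (f := fun l' (_ : l' ∈ t) => σ l') _ hlt)
  have hpast_future := indep_biSup_compl (fun l => ((hS _).sub (hS _)).comap_le)
    ((iIndepFun_iff_iIndep _ _ _).mp hinc) {l | (l : ℕ) < i}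
  refine indep_of_indep_of_le_right (indep_of_indep_of_le_left hpast_future ?_) ?_
  · refine iSup₂_le fun j hj => ?_
    have : Measurable[⨆ l ∈ {l : Fin k | (l : ℕ) < i}, σ l] (S j) := by
      simpa only [h0, sub_zero] using measurable_sub_of_measurable_increments j.zero_le
        fun l _ hl => hσ l (by omega) (show l < i by omega)
    exact this.comap_le
  · exact (measurable_sub_of_measurable_increments hi fun l hil hl =>
      hσ l hl (show ¬ l < i by omega)).comap_le

end MaximalInequality

lemma exists_dyadic_mem_Ico {n t u : ℝ} (ht : t ∈ Icc 0 n) (htu : t < u) :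
    ∃ m j : ℕ, j ≤ 2 ^ m ∧ (j : ℝ) * n / 2 ^ m ∈ Ico t u := by
  rcases (ht.1.trans ht.2).eq_or_lt with rfl | hn
  · exact ⟨0, 0, Nat.zero_le _, by simpa [le_antisymm ht.2 ht.1] using htu⟩
  obtain ⟨m, hm⟩ := exists_nat_gt (n / (u - t))
  have hpow : (0 : ℝ) < 2 ^ m := by positivity
  have hm' : n / 2 ^ m < u - t := by
    rw [div_lt_comm₀ hpow (sub_pos.mpr htu)]
    exact hm.trans (by exact_mod_cast Nat.lt_two_pow_self)
  set j := ⌈t * 2 ^ m / n⌉₊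
  have hj_ge : t * 2 ^ m / n ≤ j := Nat.le_ceil _
  have hj_lt : (j : ℝ) < t * 2 ^ m / n + 1 := Nat.ceil_lt_add_one (by have := ht.1; positivity)
  refine ⟨m, j, Nat.ceil_le.mpr ?_, ?_, ?_⟩
  · rw [div_le_iff₀ hn]
    push_cast
    nlinarith [ht.2]
  · rw [div_le_iff₀ hn] at hj_ge
    rw [le_div_iff₀ hpow]
    linarith
  · rw [div_lt_iff₀ hpow]
    rw [← sub_lt_iff_lt_add, lt_div_iff₀ hn] at hj_lt
    rw [div_lt_iff₀ hpow] at hm'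
    nlinarith

lemma exists_dyadic_lt_abs {f : ℝ → ℝ} {n t r : ℝ} (ht : t ∈ Icc 0 n)
    (hf : Tendsto f (𝓝[≥] t) (𝓝 (f t))) (hr : r < |f t|) :
    ∃ m j : ℕ, j ≤ 2 ^ m ∧ r < |f ((j : ℝ) * n / 2 ^ m)| := by
  obtain ⟨u, htu, hu⟩ := mem_nhdsGE_iff_exists_Ico_subset.mp (hf.abs.eventually_const_lt hr)
  obtain ⟨m, j, hj, hmem⟩ := exists_dyadic_mem_Ico ht htu
  exact ⟨m, j, hj, hu hmem⟩

lemma exists_dyadic_succ {q : ℝ → Prop} {n : ℝ} {m : ℕ}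
    (h : ∃ j : ℕ, j ≤ 2 ^ m ∧ q ((j : ℝ) * n / 2 ^ m)) :
    ∃ j : ℕ, j ≤ 2 ^ (m + 1) ∧ q ((j : ℝ) * n / 2 ^ (m + 1)) := by
  obtain ⟨j, hj, hq⟩ := h
  refine ⟨2 * j, by rw [pow_succ]; omega, ?_⟩
  convert hq using 1
  push_cast
  field_simp
  ring

section Levy

variable {Ω : Type*} [MeasurableSpace Ω] {P : Measure Ω} {Z : ℝ → Ω → ℝ}

lemma measure_preimage_sub_eq (hmeas : ∀ t, Measurable (Z t))
    (hstat : ∀ s t : ℝ, 0 ≤ s → 0 ≤ t →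
      Measure.map (fun ω => Z (s + t) ω - Z s ω) P = Measure.map (fun ω => Z t ω) P)
    {s t : ℝ} (hs : 0 ≤ s) (hst : s ≤ t) {B : Set ℝ} (hB : MeasurableSet B) :
    P ((fun ω => Z t ω - Z s ω) ⁻¹' B) = P (Z (t - s) ⁻¹' B) := by
  have h := hstat s (t - s) hs (sub_nonneg.mpr hst)
  rw [add_sub_cancel] at h
  calc P ((fun ω => Z t ω - Z s ω) ⁻¹' B)
      = Measure.map (fun ω => Z t ω - Z s ω) P B :=
        (Measure.map_apply ((hmeas t).sub (hmeas s)) hB).symm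
    _ = P (Z (t - s) ⁻¹' B) := by rw [h, Measure.map_apply (hmeas _) hB]

theorem measure_exists_lt_abs_le_two_mul [IsProbabilityMeasure P]
    (hmeas : ∀ t, Measurable (Z t)) (hzero : ∀ᵐ ω ∂P, Z 0 ω = 0)
    (hstat : ∀ s t : ℝ, 0 ≤ s → 0 ≤ t →
      Measure.map (fun ω => Z (s + t) ω - Z s ω) P = Measure.map (fun ω => Z t ω) P)
    (hindep : ∀ (k : ℕ) (ts : Fin (k + 1) → ℝ), Monotone ts → (∀ i, 0 ≤ ts i) →
      iIndepFun (fun i : Fin k => fun ω => Z (ts i.succ) ω - Z (ts i.castSucc) ω) P)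
    {τ : ℕ → ℝ} (hτ : Monotone τ) (hτ0 : τ 0 = 0) {k : ℕ} {n : ℝ} (hτk : τ k ≤ n)
    {c : ℝ} {A : ℝ≥0∞} (hA : ∀ t ∈ Icc 0 n, P {ω | c ≤ |Z t ω|} ≤ A) :
    P {ω | ∃ j ≤ k, 2 * c < |Z (τ j) ω|} ≤ 2 * A := by
  -- Subtracting `Z 0` makes `S` exactly the sum of its increments; `hzero` undoes it a.s.
  set S : ℕ → Ω → ℝ := fun j ω => Z (τ j) ω - Z 0 ω
  have hS j : Measurable (S j) := (hmeas _).sub (hmeas 0)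
  have hS0 ω : S 0 ω = 0 := by simp [S, hτ0]
  have hτ_nonneg i : 0 ≤ τ i := hτ0 ▸ hτ i.zero_le
  have hinc : iIndepFun (fun (l : Fin k) ω => S (l + 1) ω - S l ω) P := by
    simpa only [S, sub_sub_sub_cancel_right, Fin.val_succ, Fin.val_castSucc] using
      hindep k (fun l => τ l) (hτ.comp fun _ _ h => h) fun l => hτ_nonneg l
  have hincr i (hi : i ≤ k) : P {ω | c ≤ |S k ω - S i ω|} ≤ A := by
    calc P {ω | c ≤ |S k ω - S i ω|}
        = P ((fun ω => Z (τ k) ω - Z (τ i) ω) ⁻¹' {y | c ≤ |y|}) := by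
          simp only [S, sub_sub_sub_cancel_right]; rfl
      _ = P (Z (τ k - τ i) ⁻¹' {y | c ≤ |y|}) :=
          measure_preimage_sub_eq hmeas hstat (hτ_nonneg i) (hτ hi)
            (measurableSet_le measurable_const measurable_abs)
      _ ≤ A := hA _ ⟨sub_nonneg.mpr (hτ hi), by linarith [hτ_nonneg i]⟩
  have hS_k : P {ω | c ≤ |S k ω|} ≤ A := by
    simpa only [hS0, sub_zero] using hincr 0 k.zero_le
  calc P {ω | ∃ j ≤ k, 2 * c < |Z (τ j) ω|} ≤ P {ω | ∃ j ≤ k, 2 * c < |S j ω|} := by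
        refine measure_mono_ae (hzero.mono fun ω hω ⟨j, hj, hZj⟩ => ⟨j, hj, ?_⟩)
        simpa only [S, hω, sub_zero] using hZj
    _ ≤ P {ω | c ≤ |S k ω|} + A := measure_exists_lt_abs_le_add hS
        (fun i hi => indep_iSup_comap_of_iIndepFun_increments hS hS0 hinc hi) hincr
    _ ≤ 2 * A := by rw [two_mul]; gcongr

end Levy

/-- Etemadi's inequality for Lévy processes: if `Z` is a Lévy process
(càdlàg, `Z(0)=0`, stationary independent increments), then for every `n ≥ 0` and `x > 0`,
`P(sup_{t ∈ [0,n]} |Z(t)| ≥ x) ≤ 3 sup_{t ∈ [0,n]} P(|Z(t)| ≥ x/3)`. -/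
theorem etemadi_levy
    {Ω : Type} [MeasurableSpace Ω] (P : Measure Ω) [IsProbabilityMeasure P]
    (Z : ℝ → Ω → ℝ) (hmeas : ∀ t, Measurable (Z t)) (hzero : ∀ᵐ ω ∂P, Z 0 ω = 0)
    (hpath : ∀ ω,
      (∀ t : ℝ, 0 ≤ t →
        Filter.Tendsto (fun s => Z s ω) (nhdsWithin t (Set.Ici t)) (nhds (Z t ω))) ∧
      (∀ t : ℝ, 0 < t →
        ∃ L : ℝ, Filter.Tendsto (fun s => Z s ω) (nhdsWithin t (Set.Iio t)) (nhds L)))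
    (hstat : ∀ s t : ℝ, 0 ≤ s → 0 ≤ t →
      Measure.map (fun ω => Z (s + t) ω - Z s ω) P = Measure.map (fun ω => Z t ω) P)
    (hindep : ∀ (k : ℕ) (ts : Fin (k + 1) → ℝ), Monotone ts → (∀ i, 0 ≤ ts i) →
      iIndepFun
        (fun i : Fin k => fun ω => Z (ts i.succ) ω - Z (ts i.castSucc) ω) P) :
    ∀ n : ℝ, 0 ≤ n → ∀ x : ℝ, 0 < x →
      P {ω | x ≤ ⨆ t : Set.Icc (0 : ℝ) n, |Z (t : ℝ) ω|} ≤
        3 * ⨆ t : Set.Icc (0 : ℝ) n, P {ω | x / 3 ≤ |Z (t : ℝ) ω|} := by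
  intro n hn x hx
  have : Nonempty (Icc (0 : ℝ) n) := ⟨⟨0, le_rfl, hn⟩⟩
  set A := ⨆ t : Icc (0 : ℝ) n, P {ω | x / 3 ≤ |Z t ω|}
  set G : ℕ → Set Ω := fun m =>
    {ω | ∃ j : ℕ, j ≤ 2 ^ m ∧ 2 * (x / 3) < |Z ((j : ℝ) * n / 2 ^ m) ω|}
  have hG_mono : Monotone G := monotone_nat_of_le_succ fun m ω =>
    exists_dyadic_succ (q := fun s => 2 * (x / 3) < |Z s ω|)
  have hsup_subset : {ω | x ≤ ⨆ t : Icc (0 : ℝ) n, |Z t ω|} ⊆ ⋃ m, G m := by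
    intro ω hω
    obtain ⟨t, ht⟩ := exists_lt_of_lt_ciSup ((by linarith : 2 * (x / 3) < x).trans_le hω)
    exact mem_iUnion.mpr (exists_dyadic_lt_abs t.2 ((hpath ω).1 t t.2.1) ht)
  have hG_le m : P (G m) ≤ 2 * A := by
    refine measure_exists_lt_abs_le_two_mul hmeas hzero hstat hindep
      (τ := fun j : ℕ => (j : ℝ) * n / 2 ^ m) (k := 2 ^ m) ?_ (by simp) (by simp)
      fun t ht => le_iSup (fun t : Icc (0 : ℝ) n => P {ω | x / 3 ≤ |Z t ω|}) ⟨t, ht⟩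
    intro i j hij
    dsimp only
    gcongr
  calc P {ω | x ≤ ⨆ t : Icc (0 : ℝ) n, |Z t ω|}
      ≤ P (⋃ m, G m) := measure_mono hsup_subset
    _ = ⨆ m, P (G m) := hG_mono.measure_iUnion
    _ ≤ 2 * A := iSup_le hG_le
    _ ≤ 3 * A := by gcongr; norm_num
end
end
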